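/- arXiv:1512.01293 — 6 statements merged into one kernel-verified Lean document; each statement's English description precedes it below -/
import Mathlib

section
/- Let p be a prime, n and r positive integers, Y a finite set of vectors in F_p^n whose span has dimension r, and c : Y → F_p a fixed function. Then the fraction of x ∈ F_p^n for which there exists S ⊆ Y with span of dimension ≥ r/2 and ⟨x,y⟩ = c(y) for all y ∈ S is at most 2^{|Y|} · p^{-r/2}. -/
open Module Finset in

lemma key_count {p : ℕ} [Fact p.Prime] {n : ℕ} (S : Finset (Fin n → ZMod p))
    (c : (Fin n → ZMod p) → ZMod p) :
    (Finset.univ.filter (fun x : Fin n → ZMod p => ∀ y ∈ S, ∑ i, x i * y i = c y)).card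
      ≤ p ^ (n - Module.finrank (ZMod p)
        ↥(Submodule.span (ZMod p) (S : Set (Fin n → ZMod p)))) := by
  classical
  set b := Pi.basisFun (ZMod p) (Fin n) with hb
  set e : (Fin n → ZMod p) ≃ₗ[ZMod p] Module.Dual (ZMod p) (Fin n → ZMod p) :=
    b.toDualEquiv with hedef
  have he : ∀ (x y : Fin n → ZMod p), e x y = ∑ i, x i * y i := by
    intro x y
    have hy : y = ∑ j, y j • b j := by
      ext i
      simp [hb, Pi.basisFun_apply, Finset.sum_apply, Pi.single_apply]
    calc e x y = b.toDual x y := rfl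
    _ = ∑ i, x i * y i := by
        conv_lhs => rw [hy]
        rw [map_sum]
        refine Finset.sum_congr rfl fun j _ => ?_
        rw [map_smul, Basis.toDual_eq_repr, smul_eq_mul]
        rw [hb, Pi.basisFun_repr, mul_comm]
  set W := Submodule.span (ZMod p) (S : Set (Fin n → ZMod p)) with hW
  set K := W.dualAnnihilator.comap
    (e : (Fin n → ZMod p) →ₗ[ZMod p] Module.Dual (ZMod p) (Fin n → ZMod p)) with hK
  have hmem : ∀ x : Fin n → ZMod p, x ∈ K ↔ ∀ y ∈ S, ∑ i, x i * y i = 0 := by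
    intro x
    constructor
    · intro hx y hy
      rw [← he]
      exact (Submodule.mem_dualAnnihilator _).1 hx y (Submodule.subset_span hy)
    · intro hx
      refine (Submodule.mem_dualAnnihilator _).2 ?_
      intro w hw
      induction hw using Submodule.span_induction with
      | mem y hy =>
        show e x y = 0
        rw [he]; exact hx y hy
      | zero => exact map_zero (e x)
      | add a b' ha hb iha ihb =>
        show e x (a + b') = 0
        rw [map_add]
        show e x a + e x b' = 0
        simp only [LinearEquiv.coe_coe] at iha ihb
        rw [iha, ihb, add_zero]
      | smul a m hm ih =>
        show e x (a • m) = 0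
        rw [map_smul]
        show a • e x m = 0
        simp only [LinearEquiv.coe_coe] at ih
        rw [ih, smul_zero]
  have hKrank : Module.finrank (ZMod p) K = n - Module.finrank (ZMod p) W := by
    have h1 : K.map (e : (Fin n → ZMod p) →ₗ[ZMod p] _) = W.dualAnnihilator :=
      Submodule.map_comap_eq_of_surjective e.surjective _
    have h2 := LinearEquiv.finrank_map_eq e K
    have h3 : Module.finrank (ZMod p) ((Fin n → ZMod p) ⧸ W)
        = Module.finrank (ZMod p) W.dualAnnihilator :=
      LinearEquiv.finrank_eq (Subspace.quotEquivAnnihilator W)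
    have h4 := Submodule.finrank_quotient_add_finrank W
    have hV : Module.finrank (ZMod p) (Fin n → ZMod p) = n := by simp
    rw [h1] at h2
    omega
  have hcardK : Fintype.card K = p ^ (n - Module.finrank (ZMod p) W) := by
    rw [card_eq_pow_finrank (K := ZMod p) (V := K), ZMod.card, hKrank]
  rw [← hcardK]
  by_cases hA : (Finset.univ.filter
      (fun x : Fin n → ZMod p => ∀ y ∈ S, ∑ i, x i * y i = c y)).Nonempty
  · obtain ⟨x0, hx0⟩ := hA
    rw [Finset.mem_filter] at hx0
    have hsub : ∀ x ∈ (Finset.univ.filter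
        (fun x : Fin n → ZMod p => ∀ y ∈ S, ∑ i, x i * y i = c y)), x - x0 ∈ K := by
      intro x hx
      rw [Finset.mem_filter] at hx
      rw [hmem]
      intro y hy
      have hd : ∑ i, (x - x0) i * y i = (∑ i, x i * y i) - ∑ i, x0 i * y i := by
        rw [← Finset.sum_sub_distrib]
        exact Finset.sum_congr rfl fun i _ => by simp [sub_mul]
      rw [hd, hx.2 y hy, hx0.2 y hy, sub_self]
    have htf : ((K : Set (Fin n → ZMod p)).toFinset).card = Fintype.card K :=
      Set.toFinset_card _
    rw [← htf]
    apply Finset.card_le_card_of_injOn (fun x => x - x0)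
    · intro x hx
      rw [Finset.mem_coe, Set.mem_toFinset]
      exact hsub x (Finset.mem_coe.1 hx)
    · intro a ha b2 hb2 hab
      exact sub_left_injective hab
  · simp [Finset.not_nonempty_iff_eq_empty.1 hA]

open Module Finset in
/-- The fraction of `x ∈ F_p^n` for which there exists `S ⊆ Y` whose span has dimension at
least `r/2` with `⟨x, y⟩ = c y` for all `y ∈ S` is at most `2^{|Y|} · p^{-r/2}`, where `r` is
the dimension of the span of `Y`. -/
theorem stmt_5 {p : ℕ} [Fact p.Prime] (n r : ℕ) (hn : 0 < n) (hr : 0 < r)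
    (Y : Finset (Fin n → ZMod p))
    (hY : Module.finrank (ZMod p)
      ↥(Submodule.span (ZMod p) (Y : Set (Fin n → ZMod p))) = r)
    (c : (Fin n → ZMod p) → ZMod p) :
    (Set.ncard {x : Fin n → ZMod p | ∃ S : Finset (Fin n → ZMod p), S ⊆ Y ∧
        (r : ℝ) / 2 ≤ (Module.finrank (ZMod p)
          ↥(Submodule.span (ZMod p) (S : Set (Fin n → ZMod p))) : ℝ) ∧
        ∀ y ∈ S, ∑ i, x i * y i = c y} : ℝ) / (p : ℝ) ^ n
      ≤ 2 ^ Y.card * (p : ℝ) ^ (-(r : ℝ) / 2) := by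
  classical
  have key_count := fun S => key_count S c
  have hp2 : 2 ≤ p := (Fact.out : p.Prime).two_le
  have hp1 : (1 : ℝ) ≤ (p : ℝ) := by exact_mod_cast Nat.one_le_of_lt hp2
  have hp0 : (0 : ℝ) < (p : ℝ) := lt_of_lt_of_le one_pos hp1
  have hpn0 : (0 : ℝ) < (p : ℝ) ^ n := pow_pos hp0 n
  set P : (Fin n → ZMod p) → Prop := fun x => ∃ S : Finset (Fin n → ZMod p), S ⊆ Y ∧
      (r : ℝ) / 2 ≤ (Module.finrank (ZMod p)
        ↥(Submodule.span (ZMod p) (S : Set (Fin n → ZMod p))) : ℝ) ∧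
      ∀ y ∈ S, ∑ i, x i * y i = c y with hP
  have hncard : Set.ncard {x | P x} = (Finset.univ.filter P).card := by
    rw [Set.ncard_eq_toFinset_card']
    congr 1
    ext x
    simp
  set 𝒮 : Finset (Finset (Fin n → ZMod p)) := Y.powerset.filter
    (fun S => (r : ℝ) / 2 ≤ (Module.finrank (ZMod p)
      ↥(Submodule.span (ZMod p) (S : Set (Fin n → ZMod p))) : ℝ)) with h𝒮
  have hsubset : Finset.univ.filter P ⊆ 𝒮.biUnion
      (fun S => Finset.univ.filter (fun x : Fin n → ZMod p => ∀ y ∈ S, ∑ i, x i * y i = c y)) := by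
    intro x hx
    rw [Finset.mem_filter] at hx
    obtain ⟨S, hSY, hSd, hSsol⟩ := hx.2
    rw [Finset.mem_biUnion]
    exact ⟨S, by simp [h𝒮, Finset.mem_powerset, hSY, hSd], Finset.mem_filter.2 ⟨Finset.mem_univ x, hSsol⟩⟩
  have hterm : ∀ S ∈ 𝒮, ((Finset.univ.filter
      (fun x : Fin n → ZMod p => ∀ y ∈ S, ∑ i, x i * y i = c y)).card : ℝ)
      ≤ (p : ℝ) ^ n * (p : ℝ) ^ (-(r : ℝ) / 2) := by
    intro S hS
    rw [h𝒮, Finset.mem_filter] at hS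
    set d := Module.finrank (ZMod p)
      ↥(Submodule.span (ZMod p) (S : Set (Fin n → ZMod p))) with hd
    have hdn : d ≤ n := by
      have := Submodule.finrank_le (Submodule.span (ZMod p) (S : Set (Fin n → ZMod p)))
      simpa using this
    have h1 : ((Finset.univ.filter
        (fun x : Fin n → ZMod p => ∀ y ∈ S, ∑ i, x i * y i = c y)).card : ℝ)
        ≤ (p : ℝ) ^ (n - d) := by
      exact_mod_cast key_count S
    refine h1.trans ?_
    rw [pow_sub₀ _ (ne_of_gt hp0) hdn]
    rw [div_eq_mul_inv, ← Real.rpow_natCast (p:ℝ) d, ← Real.rpow_neg (le_of_lt hp0),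
      ← Real.rpow_natCast (p:ℝ) n]
    apply mul_le_mul_of_nonneg_left _ (Real.rpow_nonneg (le_of_lt hp0) _)
    apply Real.rpow_le_rpow_of_exponent_le hp1
    linarith [hS.2]
  have hsum : ((Finset.univ.filter P).card : ℝ)
      ≤ (𝒮.card : ℝ) * ((p : ℝ) ^ n * (p : ℝ) ^ (-(r : ℝ) / 2)) := by
    calc ((Finset.univ.filter P).card : ℝ)
        ≤ ((𝒮.biUnion (fun S => Finset.univ.filter
            (fun x : Fin n → ZMod p => ∀ y ∈ S, ∑ i, x i * y i = c y))).card : ℝ) := by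
          exact_mod_cast Finset.card_le_card hsubset
      _ ≤ ∑ S ∈ 𝒮, ((Finset.univ.filter
            (fun x : Fin n → ZMod p => ∀ y ∈ S, ∑ i, x i * y i = c y)).card : ℝ) := by
          exact_mod_cast Finset.card_biUnion_le
      _ ≤ ∑ S ∈ 𝒮, (p : ℝ) ^ n * (p : ℝ) ^ (-(r : ℝ) / 2) :=
          Finset.sum_le_sum hterm
      _ = (𝒮.card : ℝ) * ((p : ℝ) ^ n * (p : ℝ) ^ (-(r : ℝ) / 2)) := by
          rw [Finset.sum_const, nsmul_eq_mul]
  have hScard : (𝒮.card : ℝ) ≤ 2 ^ Y.card := by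
    have h1 : 𝒮.card ≤ Y.powerset.card := Finset.card_filter_le _ _
    rw [Finset.card_powerset] at h1
    exact_mod_cast h1
  rw [hncard] at *
  rw [div_le_iff₀ hpn0]
  calc ((Finset.univ.filter P).card : ℝ)
      ≤ (𝒮.card : ℝ) * ((p : ℝ) ^ n * (p : ℝ) ^ (-(r : ℝ) / 2)) := hsum
    _ ≤ (2 : ℝ) ^ Y.card * ((p : ℝ) ^ n * (p : ℝ) ^ (-(r : ℝ) / 2)) := by
        apply mul_le_mul_of_nonneg_right hScard
        positivity
    _ = 2 ^ Y.card * (p : ℝ) ^ (-(r : ℝ) / 2) * (p : ℝ) ^ n := by ring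
end

section
/- Let L, K be positive integers and let Y ⊆ ({0,1}^{LK})^L consist of L-tuples y = (y_1,...,y_L) of {0,1}-vectors, where the LK coordinates are divided into K consecutive blocks of L coordinates each and each y_i has at most one 1 in each block. Suppose all vectors appearing in tuples of Y lie in a fixed linear subspace V ⊆ F_p^{LK} of dimension r ≤ 0.1·LK (for a prime p ≥ 2), and suppose every y ∈ Y is evenly-spreading, meaning: for every set T of at most 0.1·LK coordinates, the total number of 1-entries of y_1,...,y_L lying in coordinates of T is at most 0.9·LK. Then |Y| ≤ C(LK, ≤0.9LK) · L^{0.9LK}, where C(n, ≤m) = ∑_{i=0}^{m} binom(n,i). Consequently, under any product measure μ_y on tuples in which each block of each vector independently takes each of its L+1 possible values with probability at most 1/L, μ_y(Y) ≤ C(LK, ≤0.9LK) · L^{0.9LK} · L^{-LK}. -/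
lemma exists_pivot (F : Type*) [Field F] {ι : Type*} [Fintype ι] [DecidableEq ι] :
    ∀ (r : ℕ) (V : Submodule F (ι → F)), Module.finrank F V ≤ r →
      ∃ T : Finset ι, T.card ≤ r ∧ ∀ v ∈ V, (∀ c ∈ T, v c = 0) → v = 0 := by
  intro r
  induction r with
  | zero =>
    intro V hV
    refine ⟨∅, le_rfl, ?_⟩
    intro v hv _
    have hb : V = ⊥ := Submodule.finrank_eq_zero.mp (Nat.le_zero.mp hV)
    simpa [hb] using hv
  | succ r ih =>
    intro V hV
    by_cases hbot : ∀ v ∈ V, v = 0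
    · exact ⟨∅, Nat.zero_le _, fun v hv _ => hbot v hv⟩
    · push_neg at hbot
      obtain ⟨v, hvV, hv0⟩ := hbot
      have hc' : ∃ c, v c ≠ 0 := by
        by_contra h; push_neg at h; exact hv0 (funext h)
      obtain ⟨c, hc⟩ := hc'
      set ψ : V →ₗ[F] F := (LinearMap.proj c).comp V.subtype with hψ
      have hsurj : LinearMap.range ψ = ⊤ := by
        rcases eq_bot_or_eq_top (LinearMap.range ψ) with h | h
        · exfalso
          have : ψ ⟨v, hvV⟩ = 0 := by
            have : ψ ⟨v, hvV⟩ ∈ LinearMap.range ψ := LinearMap.mem_range_self _ _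
            simpa [h] using this
          exact hc (by simpa [hψ] using this)
        · exact h
      have hker : Module.finrank F (LinearMap.ker ψ) ≤ r := by
        have hrank := LinearMap.finrank_range_add_finrank_ker ψ
        rw [hsurj] at hrank
        simp [Module.finrank_self] at hrank
        omega
      set W : Submodule F (ι → F) := (LinearMap.ker ψ).map V.subtype with hW
      have hWr : Module.finrank F W ≤ r := by
        rw [hW, Submodule.finrank_map_subtype_eq]
        exact hker
      obtain ⟨T', hT'card, hT'⟩ := ih W hWr
      refine ⟨insert c T', (Finset.card_insert_le _ _).trans (Nat.succ_le_succ hT'card), ?_⟩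
      intro u huV hu
      have huc : u c = 0 := hu c (Finset.mem_insert_self _ _)
      have huW : u ∈ W := by
        refine ⟨⟨u, huV⟩, ?_, rfl⟩
        simp [LinearMap.mem_ker, hψ, huc]
      exact hT' u huW (fun c' hc'' => hu c' (Finset.mem_insert_of_mem hc''))



/-- Counting evenly-spreading block-structured tuples whose vectors lie in a low-dimensional
subspace.  Coordinates are indexed by `Fin K × Fin L` (`K` blocks of `L` coordinates).  Each
tuple `t ∈ Y` consists of `L` `{0,1}`-vectors `t 0, ..., t (L-1)` with at most one `1` per
block, each lying (as a vector over `F_p`) in a subspace `V` of dimension `r ≤ 0.1·LK`, and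
each tuple is evenly-spreading.  Then `|Y| ≤ C(LK, ≤0.9LK) · L^{0.9LK}`; consequently, for
any weight function with `w t ≤ L^{-LK}` pointwise (as holds for any product measure where
each block of each vector takes each of its `L+1` values with probability at most `1/L`),
the total weight of `Y` is at most `C(LK, ≤0.9LK) · L^{0.9LK} · L^{-LK}`. -/
theorem stmt_6 {p : ℕ} [Fact p.Prime] (L K r : ℕ) (hL : 0 < L) (hK : 0 < K)
    (Y : Finset (Fin L → (Fin K × Fin L) → Bool))
    (V : Submodule (ZMod p) ((Fin K × Fin L) → ZMod p))
    (hV : Module.finrank (ZMod p) ↥V = r)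
    (hr : (r : ℚ) ≤ (L * K : ℚ) / 10)
    (hone : ∀ t ∈ Y, ∀ i : Fin L, ∀ k : Fin K,
      (Finset.univ.filter fun l : Fin L => t i (k, l)).card ≤ 1)
    (hmem : ∀ t ∈ Y, ∀ i : Fin L,
      (fun c : Fin K × Fin L => if t i c then (1 : ZMod p) else 0) ∈ V)
    (hes : ∀ t ∈ Y, ∀ T : Finset (Fin K × Fin L),
      (T.card : ℚ) ≤ (L * K : ℚ) / 10 →
      ((∑ i : Fin L, (T.filter fun c => t i c).card : ℕ) : ℚ) ≤ 9 * (L * K : ℚ) / 10) :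
    (Y.card : ℝ) ≤
      (∑ j ∈ (Finset.range (L * K + 1)).filter
          (fun j : ℕ => (j : ℚ) ≤ 9 * (L * K : ℚ) / 10), ((L * K).choose j : ℝ))
        * (L : ℝ) ^ ((0.9 : ℝ) * (L * K : ℝ)) ∧
    ∀ w : (Fin L → (Fin K × Fin L) → Bool) → ℝ,
      (∀ t, 0 ≤ w t) → (∀ t, w t ≤ (L : ℝ) ^ (-(L * K : ℝ))) →
      ∑ t ∈ Y, w t ≤
        (∑ j ∈ (Finset.range (L * K + 1)).filter
            (fun j : ℕ => (j : ℚ) ≤ 9 * (L * K : ℚ) / 10), ((L * K).choose j : ℝ))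
          * (L : ℝ) ^ ((0.9 : ℝ) * (L * K : ℝ)) * (L : ℝ) ^ (-(L * K : ℝ)) := by
  classical
  obtain ⟨T, hTcard, hTinj⟩ := exists_pivot (ZMod p) r V (le_of_eq hV)
  have hTq : (T.card : ℚ) ≤ (L * K : ℚ) / 10 :=
    le_trans (by exact_mod_cast Nat.cast_le.mpr hTcard) hr
  set St : (Fin L → (Fin K × Fin L) → Bool) → Finset (Fin L × Fin K) :=
    fun t => Finset.univ.filter
      (fun ik => ∃ l : Fin L, t ik.1 (ik.2, l) = true ∧ (ik.2, l) ∈ T) with hStdef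
  set g : (Fin L → (Fin K × Fin L) → Bool) → Fin L × Fin K → Fin L :=
    fun t ik => if h : ∃ l : Fin L, t ik.1 (ik.2, l) = true ∧ (ik.2, l) ∈ T
      then h.choose else ⟨0, hL⟩ with hgdef
  -- recovery lemma
  have hrec : ∀ t ∈ Y, ∀ (i : Fin L) (k : Fin K) (l : Fin L), (k, l) ∈ T →
      (t i (k, l) = true ↔ ((i, k) ∈ St t ∧ g t (i, k) = l)) := by
    intro t ht i k l hlT
    have huniq : ∀ l₁ l₂ : Fin L, t i (k, l₁) = true → t i (k, l₂) = true → l₁ = l₂ := by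
      intro l₁ l₂ h₁ h₂
      have hcard := hone t ht i k
      have h1 : l₁ ∈ Finset.univ.filter fun l : Fin L => t i (k, l) := by simp [h₁]
      have h2 : l₂ ∈ Finset.univ.filter fun l : Fin L => t i (k, l) := by simp [h₂]
      exact Finset.card_le_one.mp hcard _ h1 _ h2
    constructor
    · intro htrue
      have hex : ∃ l : Fin L, t i (k, l) = true ∧ (k, l) ∈ T := ⟨l, htrue, hlT⟩
      refine ⟨by simp only [hStdef, Finset.mem_filter, Finset.mem_univ, true_and]; exact hex, ?_⟩
      have hg : g t (i, k) = hex.choose := by simp only [hgdef]; rw [dif_pos hex]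
      rw [hg]
      exact huniq _ _ hex.choose_spec.1 htrue
    · rintro ⟨hmem', hgl⟩
      have hex : ∃ l : Fin L, t i (k, l) = true ∧ (k, l) ∈ T := by
        simpa [hStdef, Finset.mem_filter] using hmem'
      have hg : g t (i, k) = hex.choose := by simp only [hgdef]; rw [dif_pos hex]
      rw [hg] at hgl
      rw [← hgl]
      exact hex.choose_spec.1
  -- card bound for St t
  have hcard_St : ∀ t ∈ Y, ((St t).card : ℚ) ≤ 9 * (L * K : ℚ) / 10 := by
    intro t ht
    have hinj : (St t).card ≤ ∑ i : Fin L, (T.filter fun c => t i c).card := by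
      have hle := Finset.card_le_card_of_injOn
        (f := fun ik : Fin L × Fin K => (⟨ik.1, (ik.2, g t ik)⟩ : Σ _ : Fin L, Fin K × Fin L))
        (s := St t)
        (t := Finset.univ.sigma (fun i : Fin L => T.filter fun c => t i c))
        ?_ ?_
      · simpa [Finset.card_sigma] using hle
      · intro ik hik
        have hex : ∃ l : Fin L, t ik.1 (ik.2, l) = true ∧ (ik.2, l) ∈ T := by
          simpa [hStdef, Finset.mem_filter] using hik
        have hspec := hex.choose_spec
        have hg : g t ik = hex.choose := by simp only [hgdef]; rw [dif_pos hex]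
        simp only [Finset.mem_coe, Finset.mem_sigma, Finset.mem_univ, true_and, Finset.mem_filter, hg]
        exact ⟨hspec.2, by simpa using hspec.1⟩
      · intro a _ b _ hab
        have h1 : a.1 = b.1 := congrArg Sigma.fst hab
        have h2 : (a.2, g t a) = (b.2, g t b) :=
          eq_of_heq (Sigma.mk.inj_iff.mp hab).2
        exact Prod.ext h1 (congrArg Prod.fst h2)
    calc ((St t).card : ℚ)
        ≤ ((∑ i : Fin L, (T.filter fun c => t i c).card : ℕ) : ℚ) := by exact_mod_cast hinj
      _ ≤ 9 * (L * K : ℚ) / 10 := hes t ht T hTq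
  -- determination lemma
  have hdet : ∀ t ∈ Y, ∀ t' ∈ Y, St t = St t' → (∀ ik ∈ St t, g t ik = g t' ik) → t = t' := by
    intro t ht t' ht' hS hg
    funext i c
    have hT' : ∀ c' ∈ T, (if t i c' then (1 : ZMod p) else 0) = (if t' i c' then (1 : ZMod p) else 0) := by
      intro c' hc'
      obtain ⟨k, l⟩ := c'
      have h1 := hrec t ht i k l hc'
      have h2 := hrec t' ht' i k l hc'
      by_cases h : t i (k, l) = true
      · have hm := h1.mp h
        have hmm : (i, k) ∈ St t' := hS ▸ hm.1
        have ht'true : t' i (k, l) = true := h2.mpr ⟨hmm, by rw [← hg _ hm.1]; exact hm.2⟩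
        simp [h, ht'true]
      · have h' : ¬ (t' i (k, l) = true) := by
          intro htr
          have hm' := h2.mp htr
          have hmemt : (i, k) ∈ St t := hS ▸ hm'.1
          exact h (h1.mpr ⟨hmemt, (hg _ hmemt).trans hm'.2⟩)
        simp [h, h']
    have hsub : ((fun c => (if t i c then (1 : ZMod p) else 0)) -
        fun c => if t' i c then (1 : ZMod p) else 0) ∈ V :=
      Submodule.sub_mem V (hmem t ht i) (hmem t' ht' i)
    have hzero := hTinj _ hsub (fun c' hc' => by
      simp only [Pi.sub_apply]
      rw [hT' c' hc', sub_self])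
    have hveq : (fun c => (if t i c then (1 : ZMod p) else 0)) =
        fun c => if t' i c then (1 : ZMod p) else 0 := sub_eq_zero.mp hzero
    have hcc := congrFun hveq c
    cases hb : t i c <;> cases hb' : t' i c <;> simp [hb, hb'] at hcc ⊢
  -- fiber count
  have hfiber : ∀ j, ((Y.filter fun t => (St t).card = j).card : ℝ)
      ≤ ((L * K).choose j : ℝ) * (L : ℝ) ^ (j : ℕ) := by
    intro j
    have h1 : (Y.filter fun t => (St t).card = j).card
        = ∑ S ∈ (Finset.univ : Finset (Fin L × Fin K)).powersetCard j,
            ((Y.filter fun t => (St t).card = j).filter fun t => St t = S).card := by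
      apply Finset.card_eq_sum_card_fiberwise
      intro t ht
      simp only [Finset.mem_coe, Finset.mem_filter] at ht
      simpa [Finset.mem_powersetCard_univ] using ht.2
    have h2 : ∀ S ∈ (Finset.univ : Finset (Fin L × Fin K)).powersetCard j,
        ((Y.filter fun t => (St t).card = j).filter fun t => St t = S).card ≤ L ^ j := by
      intro S hS
      have hScard : S.card = j := Finset.mem_powersetCard_univ.mp hS
      have hle := Finset.card_le_card_of_injOn
        (f := fun t (a : {x // x ∈ S}) => g t a.1)
        (s := (Y.filter fun t => (St t).card = j).filter fun t => St t = S)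
        (t := (Finset.univ : Finset ({x // x ∈ S} → Fin L)))
        (fun _ _ => Finset.mem_univ _) ?_
      · calc ((Y.filter fun t => (St t).card = j).filter fun t => St t = S).card
            ≤ (Finset.univ : Finset ({x // x ∈ S} → Fin L)).card := hle
          _ = L ^ j := by
              simp [Finset.card_univ, Fintype.card_fun, Fintype.card_coe, hScard]
      · intro t ht t' ht' hgg
        simp only [Finset.mem_coe, Finset.mem_filter] at ht ht'
        apply hdet t ht.1.1 t' ht'.1.1 (ht.2.trans ht'.2.symm)
        intro ik hik
        have hikS : ik ∈ S := ht.2 ▸ hik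
        exact congrFun hgg ⟨ik, hikS⟩
    have h3 : (Y.filter fun t => (St t).card = j).card ≤ (L * K).choose j * L ^ j := by
      rw [h1]
      calc ∑ S ∈ (Finset.univ : Finset (Fin L × Fin K)).powersetCard j,
            ((Y.filter fun t => (St t).card = j).filter fun t => St t = S).card
          ≤ ∑ _S ∈ (Finset.univ : Finset (Fin L × Fin K)).powersetCard j, L ^ j :=
            Finset.sum_le_sum h2
        _ = (L * K).choose j * L ^ j := by
            rw [Finset.sum_const, smul_eq_mul]
            congr 1
            rw [Finset.card_powersetCard]
            simp [Finset.card_univ]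
    exact_mod_cast h3
  set J := (Finset.range (L * K + 1)).filter
      (fun j : ℕ => (j : ℚ) ≤ 9 * (L * K : ℚ) / 10) with hJ
  have hYsplit : Y.card = ∑ j ∈ J, (Y.filter fun t => (St t).card = j).card := by
    apply Finset.card_eq_sum_card_fiberwise
    intro t ht
    simp only [hJ, Finset.mem_coe, Finset.mem_filter, Finset.mem_range]
    refine ⟨?_, hcard_St t ht⟩
    have h1 : (St t).card ≤ Fintype.card (Fin L × Fin K) := Finset.card_le_univ _
    simp only [Fintype.card_prod, Fintype.card_fin] at h1
    omega
  have hmain : (Y.card : ℝ) ≤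
      (∑ j ∈ J, ((L * K).choose j : ℝ)) * (L : ℝ) ^ ((0.9 : ℝ) * (L * K : ℝ)) := by
    rw [hYsplit, Finset.sum_mul]
    push_cast
    apply Finset.sum_le_sum
    intro j hj
    have hjq : (j : ℚ) ≤ 9 * (L * K : ℚ) / 10 := (Finset.mem_filter.mp hj).2
    have hjr : (j : ℝ) ≤ (0.9 : ℝ) * (L * K : ℝ) := by
      have hq : (j : ℝ) ≤ 9 * ((L : ℝ) * (K : ℝ)) / 10 := by
        have hq' := (Rat.cast_le (K := ℝ)).mpr hjq
        push_cast at hq'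
        linarith
      rw [show (0.9 : ℝ) = 9 / 10 by norm_num]
      push_cast
      linarith
    calc ((Y.filter fun t => (St t).card = j).card : ℝ)
        ≤ ((L * K).choose j : ℝ) * (L : ℝ) ^ (j : ℕ) := hfiber j
      _ ≤ ((L * K).choose j : ℝ) * (L : ℝ) ^ ((0.9 : ℝ) * (L * K : ℝ)) := by
          apply mul_le_mul_of_nonneg_left _ (by positivity)
          rw [← Real.rpow_natCast (L : ℝ) j]
          exact Real.rpow_le_rpow_of_exponent_le (by exact_mod_cast Nat.one_le_iff_ne_zero.mpr hL.ne') hjr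
  refine ⟨hmain, ?_⟩
  intro w hw0 hw1
  calc ∑ t ∈ Y, w t ≤ ∑ _t ∈ Y, (L : ℝ) ^ (-(L * K : ℝ)) :=
        Finset.sum_le_sum (fun t _ => hw1 t)
    _ = (Y.card : ℝ) * (L : ℝ) ^ (-(L * K : ℝ)) := by
        rw [Finset.sum_const, nsmul_eq_mul]
    _ ≤ _ := mul_le_mul_of_nonneg_right hmain (Real.rpow_nonneg (by positivity) _)
end

section
/- With the setup of the previous statement, if LK is large enough then with probability at least 0.95 the random tuple y is evenly-spreading: for every set S of at most 0.1·LK coordinates, the total number of 1-entries of y_1,...,y_L in S is at most 0.9·LK. Concretely, the failure probability is at most 2^{LK} · exp(−32·LK/25) < 0.05 for LK sufficiently large. -/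
open MeasureTheory ProbabilityTheory

/-- The number of 1-entries, inside a coordinate set `S`, of the random tuple of `L` vectors
encoded by `ξ` (see `stmt_8`). -/
def onesIn (L K : ℕ) {Ω : Type*} (ξ : Fin L × Fin K → Ω → ℕ)
    (S : Finset (Fin K × Fin L)) (ω : Ω) : ℕ :=
  ∑ i : Fin L, (S.filter fun c => ξ (i, c.1) ω = (c.2 : ℕ)).card

lemma amgm9 {ι : Type*} [Fintype ι] [Nonempty ι] (a : ι → ℝ) (ha : ∀ i, 0 ≤ a i)
    (h : ∑ i, a i ≤ 9 * Fintype.card ι) : ∏ i, a i ≤ 9 ^ Fintype.card ι := by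
  set n := Fintype.card ι with hn
  have hn0 : 0 < n := Fintype.card_pos
  have hnR : (0:ℝ) < n := by exact_mod_cast hn0
  have hw : ∑ _i : ι, (n:ℝ)⁻¹ = 1 := by
    rw [Finset.sum_const, Finset.card_univ, ← hn, nsmul_eq_mul, mul_inv_cancel₀ hnR.ne']
  have key := Real.geom_mean_le_arith_mean_weighted Finset.univ (fun _ => (n:ℝ)⁻¹) a
    (fun i _ => by positivity) hw (fun i _ => ha i)
  rw [Real.finset_prod_rpow _ _ (fun i _ => ha i)] at key
  have h2 : ∑ i, (n:ℝ)⁻¹ * a i ≤ 9 := by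
    rw [← Finset.mul_sum]
    calc (n:ℝ)⁻¹ * ∑ i, a i ≤ (n:ℝ)⁻¹ * (9 * n) := by gcongr
      _ = 9 := by field_simp
  have h3 : (∏ i, a i) ^ ((n:ℝ)⁻¹) ≤ 9 := key.trans h2
  have hp : 0 ≤ ∏ i, a i := Finset.prod_nonneg fun i _ => ha i
  calc ∏ i, a i = ((∏ i, a i) ^ ((n:ℝ)⁻¹)) ^ (n:ℕ) := by
        rw [← Real.rpow_natCast (_ ^ _) n, ← Real.rpow_mul hp,
          inv_mul_cancel₀ hnR.ne', Real.rpow_one]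
    _ ≤ 9 ^ n := by
        apply pow_le_pow_left₀ (Real.rpow_nonneg hp _) h3

lemma onesIn_eq (L K : ℕ) {Ω : Type} (ξ : Fin L × Fin K → Ω → ℕ)
    (S : Finset (Fin K × Fin L)) (ω : Ω) :
    onesIn L K ξ S ω
      = ∑ j : Fin L × Fin K, (S.filter fun c => c.1 = j.2 ∧ ξ j ω = (c.2 : ℕ)).card := by
  rw [onesIn, Fintype.sum_prod_type]
  refine Finset.sum_congr rfl fun i _ => ?_
  rw [Finset.card_eq_sum_card_fiberwise (f := fun c => c.1) (t := Finset.univ)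
    (fun c _ => Finset.mem_univ _)]
  refine Finset.sum_congr rfl fun k _ => ?_
  congr 1
  rw [Finset.filter_filter]
  apply Finset.filter_congr
  intro c _
  constructor
  · rintro ⟨h1, h2⟩; exact ⟨h2, h2 ▸ h1⟩
  · rintro ⟨h1, h2⟩; exact ⟨h1 ▸ h2, h1⟩

set_option maxHeartbeats 2000000 in
lemma perS {L K : ℕ} (hL : 0 < L) (hK : 0 < K) {Ω : Type} [MeasurableSpace Ω]
    (μ : Measure Ω) [IsProbabilityMeasure μ] (ξ : Fin L × Fin K → Ω → ℕ)
    (hmeas : ∀ b, Measurable (ξ b))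
    (hindep : iIndepFun (m := fun _ : Fin L × Fin K => (inferInstance : MeasurableSpace ℕ)) ξ μ)
    (hprob : ∀ b v, μ {ω | ξ b ω = v} ≤ (L : ENNReal)⁻¹)
    (S : Finset (Fin K × Fin L)) (hS : (S.card : ℝ) ≤ (L * K : ℝ) / 10) :
    μ {ω | ¬ ((onesIn L K ξ S ω : ℝ) ≤ 9 * (L * K : ℝ) / 10)}
      ≤ ENNReal.ofReal (Real.exp (-(32 * (L * K : ℝ)) / 25)) := by
  classical
  haveI : Nonempty (Fin L × Fin K) := ⟨(⟨0, hL⟩, ⟨0, hK⟩)⟩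
  set t : ℝ := Real.log 81 with ht_def
  have ht : (0:ℝ) < t := Real.log_pos (by norm_num)
  have het : Real.exp t = 81 := Real.exp_log (by norm_num)
  set g : (Fin L × Fin K) → ℕ → ℝ :=
    fun j v => ((S.filter fun c => c.1 = j.2 ∧ v = (c.2 : ℕ)).card : ℝ) with hg_def
  set X : (Fin L × Fin K) → Ω → ℝ := fun j => g j ∘ ξ j with hX_def
  set B : (Fin L × Fin K) → Set ℕ :=
    fun j => {v | ∃ c ∈ S, c.1 = j.2 ∧ v = (c.2 : ℕ)} with hB_def
  set A : (Fin L × Fin K) → Set Ω := fun j => ξ j ⁻¹' B j with hA_def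
  set p : (Fin L × Fin K) → ℝ := fun j => (μ (A j)).toReal with hp_def
  have hp0 : ∀ j, 0 ≤ p j := fun j => ENNReal.toReal_nonneg
  have hg_eq : ∀ j v, g j v = if v ∈ B j then 1 else 0 := by
    intro j v
    by_cases h : v ∈ B j
    · have hcard : (S.filter fun c => c.1 = j.2 ∧ v = (c.2 : ℕ)).card = 1 := by
        obtain ⟨c, hc, h1, h2⟩ := h
        apply le_antisymm
        · apply Finset.card_le_one.2
          intro a ha b hb
          simp only [Finset.mem_filter] at ha hb
          ext
          · rw [ha.2.1, hb.2.1]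
          · rw [← ha.2.2, ← hb.2.2]
        · exact Finset.card_pos.2 ⟨c, Finset.mem_filter.2 ⟨hc, h1, h2⟩⟩
      simp [hg_def, hcard, h]
    · have hcard : (S.filter fun c => c.1 = j.2 ∧ v = (c.2 : ℕ)).card = 0 := by
        rw [Finset.card_eq_zero, Finset.filter_eq_empty_iff]
        intro c hc hcon
        exact h ⟨c, hc, hcon.1, hcon.2⟩
      simp [hg_def, hcard, h]
  have hX_ind : ∀ j, X j = (A j).indicator (fun _ => (1:ℝ)) := by
    intro j
    funext ω
    rw [hX_def]
    simp only [Function.comp_apply, hg_eq, Set.indicator_apply, hA_def, Set.mem_preimage]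
  have hX01 : ∀ j ω, X j ω = 0 ∨ X j ω = 1 := by
    intro j ω
    rw [hX_ind]
    by_cases h : ω ∈ A j <;> simp [Set.indicator_apply, h]
  have hBmeas : ∀ j, MeasurableSet (B j) := fun j => (Set.to_countable _).measurableSet
  have hAmeas : ∀ j, MeasurableSet (A j) := fun j => hmeas j (hBmeas j)
  have hXmeas : ∀ j, Measurable (X j) := fun j => measurable_from_nat.comp (hmeas j)
  have hXindep : iIndepFun (m := fun _ => inferInstance) X μ :=
    hindep.comp g fun j => measurable_from_nat
  have hXint : ∀ j, Integrable (X j) μ := by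
    intro j
    rw [hX_ind]
    exact (integrable_const (1:ℝ)).indicator (hAmeas j)
  have hintX : ∀ j, ∫ ω, X j ω ∂μ = p j := by
    intro j
    rw [hX_ind, integral_indicator_const (1:ℝ) (hAmeas j)]
    simp [hp_def, measureReal_def]
  have hmgf : ∀ j, mgf (X j) μ t = 1 + 80 * p j := by
    intro j
    have hfun : ∀ ω, Real.exp (t * X j ω) = 1 + 80 * X j ω := by
      intro ω
      rcases hX01 j ω with h | h
      · simp [h]
      · rw [h, mul_one, het]; norm_num
    rw [mgf]
    simp only [hfun]
    rw [integral_add (integrable_const 1) ((hXint j).const_mul 80), integral_const_mul,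
      hintX, integral_const]
    simp
  -- sum of probabilities bound
  have hfib : ∑ k : Fin K, (S.filter fun c => c.1 = k).card = S.card :=
    (Finset.card_eq_sum_card_fiberwise
      (f := fun c : Fin K × Fin L => c.1) (s := S) (t := Finset.univ)
      (fun c _ => Finset.mem_univ _)).symm
  have hA_le : ∀ j, μ (A j) ≤ ((S.filter fun c => c.1 = j.2).card : ENNReal) * (L : ENNReal)⁻¹ := by
    intro j
    have hsub : A j ⊆ ⋃ c ∈ (S.filter fun c => c.1 = j.2), {ω | ξ j ω = (c.2 : ℕ)} := by
      intro ω hω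
      obtain ⟨c, hc, h1, h2⟩ := hω
      exact Set.mem_biUnion (Finset.mem_filter.2 ⟨hc, h1⟩) h2
    calc μ (A j) ≤ μ (⋃ c ∈ (S.filter fun c => c.1 = j.2), {ω | ξ j ω = (c.2 : ℕ)}) :=
          measure_mono hsub
      _ ≤ ∑ c ∈ (S.filter fun c => c.1 = j.2), μ {ω | ξ j ω = (c.2 : ℕ)} :=
          measure_biUnion_finset_le _ _
      _ ≤ ∑ _c ∈ (S.filter fun c => c.1 = j.2), (L : ENNReal)⁻¹ :=
          Finset.sum_le_sum fun c _ => hprob j _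
      _ = ((S.filter fun c => c.1 = j.2).card : ENNReal) * (L : ENNReal)⁻¹ := by
          rw [Finset.sum_const, nsmul_eq_mul]
  have hsum_A : ∑ j : Fin L × Fin K, μ (A j) ≤ (S.card : ENNReal) := by
    calc ∑ j : Fin L × Fin K, μ (A j)
        ≤ ∑ j : Fin L × Fin K, ((S.filter fun c => c.1 = j.2).card : ENNReal) * (L : ENNReal)⁻¹ :=
          Finset.sum_le_sum fun j _ => hA_le j
      _ = (((L * S.card : ℕ) : ENNReal)) * (L : ENNReal)⁻¹ := by
          rw [← Finset.sum_mul]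
          congr 1
          rw [Fintype.sum_prod_type]
          have hinner : ∀ _x : Fin L, ∑ k : Fin K, ((S.filter fun c => c.1 = k).card : ENNReal)
              = ((S.card : ℕ) : ENNReal) := by
            intro _x
            rw [← Nat.cast_sum, hfib]
          rw [Finset.sum_congr rfl fun x _ => hinner x, Finset.sum_const, Finset.card_univ,
            Fintype.card_fin, nsmul_eq_mul]
          push_cast
          ring
      _ = (S.card : ENNReal) := by
          push_cast
          rw [mul_comm (L : ENNReal), mul_assoc, ENNReal.mul_inv_cancel
            (by exact_mod_cast hL.ne') (ENNReal.natCast_ne_top L), mul_one]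
  have hsum_p : ∑ j, p j ≤ (S.card : ℝ) := by
    have h1 : ∑ j, p j = (∑ j : Fin L × Fin K, μ (A j)).toReal := by
      rw [ENNReal.toReal_sum fun j _ => measure_ne_top μ _]
    rw [h1]
    calc (∑ j : Fin L × Fin K, μ (A j)).toReal ≤ ((S.card : ENNReal)).toReal :=
          ENNReal.toReal_mono (ENNReal.natCast_ne_top _) hsum_A
      _ = (S.card : ℝ) := by simp
  -- AM-GM bound on the product of mgfs
  have hcardLK : Fintype.card (Fin L × Fin K) = L * K := by simp
  have hprod : ∏ j, (1 + 80 * p j) ≤ 9 ^ (L * K) := by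
    rw [← hcardLK]
    apply amgm9 _ (fun j => by positivity)
    have : ∑ j, (1 + 80 * p j) = Fintype.card (Fin L × Fin K) + 80 * ∑ j, p j := by
      rw [Finset.sum_add_distrib, Finset.sum_const, Finset.card_univ, nsmul_eq_mul, mul_one,
        Finset.mul_sum]
    rw [this, hcardLK]
    have hLK : (0:ℝ) ≤ (L*K : ℕ) := by positivity
    push_cast
    nlinarith [hS]
  -- integrability of exp(t * sum)
  have hsum_meas : Measurable (fun ω => ∑ j, X j ω) :=
    Finset.measurable_sum _ fun j _ => hXmeas j
  have hX_le1 : ∀ j ω, X j ω ≤ 1 := by intro j ω; rcases hX01 j ω with h | h <;> simp [h]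
  have hsum_le : ∀ ω, ∑ j, X j ω ≤ (L * K : ℝ) := by
    intro ω
    calc ∑ j, X j ω ≤ ∑ _j : Fin L × Fin K, (1:ℝ) := Finset.sum_le_sum fun j _ => hX_le1 j ω
      _ = (L * K : ℝ) := by
          rw [Finset.sum_const, Finset.card_univ, hcardLK, nsmul_eq_mul, mul_one]
          push_cast; ring
  have hint : Integrable (fun ω => Real.exp (t * ∑ j, X j ω)) μ := by
    apply Integrable.mono' (integrable_const (Real.exp (t * (L * K : ℝ))))
      ((hsum_meas.const_mul t).exp.aestronglyMeasurable)
    filter_upwards with ω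
    rw [Real.norm_eq_abs, abs_of_pos (Real.exp_pos _)]
    exact Real.exp_le_exp.2 (mul_le_mul_of_nonneg_left (hsum_le ω) ht.le)
  have hchern := measure_ge_le_exp_mul_mgf (μ := μ) (X := fun ω => ∑ j, X j ω)
    (9 * (L * K : ℝ) / 10) ht.le hint
  have hmgfsum : mgf (fun ω => ∑ j, X j ω) μ t = ∏ j, mgf (X j) μ t := by
    have hfe : (fun ω => ∑ j, X j ω) = ∑ j, X j := by
      funext ω; rw [Finset.sum_apply]
    rw [hfe, hXindep.mgf_sum hXmeas]
  have hlog9 : (8/5 : ℝ) ≤ Real.log 9 := by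
    rw [Real.le_log_iff_exp_le (by norm_num : (0:ℝ) < 9)]
    have h1 : Real.exp (8/5) ≤ Real.exp 1 * Real.exp 1 := by
      rw [← Real.exp_add]; apply Real.exp_le_exp.2; norm_num
    have h2 := Real.exp_one_lt_d9
    nlinarith [Real.exp_pos 1]
  have hlog81 : t = 2 * Real.log 9 := by
    rw [ht_def, show (81:ℝ) = 9 ^ 2 by norm_num, Real.log_pow]; push_cast; ring
  have hbound : Real.exp (-t * (9 * (L * K : ℝ) / 10)) * (9:ℝ) ^ (L * K)
      ≤ Real.exp (-(32 * (L * K : ℝ)) / 25) := by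
    have h9 : (9:ℝ) ^ (L * K) = Real.exp ((L * K : ℕ) * Real.log 9) := by
      rw [Real.exp_nat_mul, Real.exp_log (by norm_num : (0:ℝ) < 9)]
    rw [h9, ← Real.exp_add, Real.exp_le_exp, hlog81]
    have hn0 : (0:ℝ) ≤ (L * K : ℕ) := by positivity
    push_cast
    push_cast at hn0
    nlinarith [hlog9, hn0]
  have hfinal : (μ {ω | 9 * (L * K : ℝ) / 10 ≤ ∑ j, X j ω}).toReal
      ≤ Real.exp (-(32 * (L * K : ℝ)) / 25) := by
    calc (μ {ω | 9 * (L * K : ℝ) / 10 ≤ ∑ j, X j ω}).toReal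
        ≤ Real.exp (-t * (9 * (L * K : ℝ) / 10)) * mgf (fun ω => ∑ j, X j ω) μ t := hchern
      _ = Real.exp (-t * (9 * (L * K : ℝ) / 10)) * ∏ j, (1 + 80 * p j) := by
          rw [hmgfsum]; congr 1; exact Finset.prod_congr rfl fun j _ => hmgf j
      _ ≤ Real.exp (-t * (9 * (L * K : ℝ) / 10)) * (9:ℝ) ^ (L * K) :=
          mul_le_mul_of_nonneg_left hprod (Real.exp_nonneg _)
      _ ≤ _ := hbound
  have hsubset : {ω | ¬ ((onesIn L K ξ S ω : ℝ) ≤ 9 * (L * K : ℝ) / 10)}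
      ⊆ {ω | 9 * (L * K : ℝ) / 10 ≤ ∑ j, X j ω} := by
    intro ω hω
    have heq : (onesIn L K ξ S ω : ℝ) = ∑ j, X j ω := by
      rw [onesIn_eq]
      push_cast
      rfl
    show 9 * (L * K : ℝ) / 10 ≤ ∑ j, X j ω
    rw [← heq]
    exact le_of_lt (not_le.1 hω)
  calc μ _ ≤ μ {ω | 9 * (L * K : ℝ) / 10 ≤ ∑ j, X j ω} := measure_mono hsubset
    _ ≤ ENNReal.ofReal (Real.exp (-(32 * (L * K : ℝ)) / 25)) :=
      (ENNReal.le_ofReal_iff_toReal_le (measure_ne_top μ _) (Real.exp_nonneg _)).2 hfinal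


lemma onesIn_measurable {L K : ℕ} {Ω : Type} [MeasurableSpace Ω]
    (ξ : Fin L × Fin K → Ω → ℕ) (hmeas : ∀ b, Measurable (ξ b))
    (S : Finset (Fin K × Fin L)) : Measurable fun ω => onesIn L K ξ S ω := by
  unfold onesIn
  apply Finset.measurable_sum
  intro i _
  have hfe : (fun ω => (S.filter fun c => ξ (i, c.1) ω = (c.2 : ℕ)).card)
      = fun ω => ∑ c ∈ S, if ξ (i, c.1) ω = (c.2 : ℕ) then 1 else 0 := by
    funext ω; rw [Finset.card_filter]
  rw [hfe]
  apply Finset.measurable_sum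
  intro c _
  exact (measurable_from_nat (f := fun v => if v = (c.2 : ℕ) then 1 else 0)).comp
    (hmeas (i, c.1))

set_option maxHeartbeats 1000000 in
/-- For `LK` large enough, with probability at least `0.95` the random tuple is
evenly-spreading (every coordinate set `S` of size at most `0.1·LK` contains at most
`0.9·LK` ones); the failure probability is at most `2^{LK} · exp(−32·LK/25)`. -/
theorem stmt_9 : ∃ N : ℕ, ∀ L K : ℕ, 0 < L → 0 < K → N ≤ L * K →
    ∀ (Ω : Type) [MeasurableSpace Ω] (μ : Measure Ω), IsProbabilityMeasure μ →
    ∀ ξ : Fin L × Fin K → Ω → ℕ,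
      (∀ b, Measurable (ξ b)) →
      (∀ b ω, ξ b ω ≤ L) →
      iIndepFun (m := fun _ : Fin L × Fin K => (inferInstance : MeasurableSpace ℕ)) ξ μ →
      (∀ b v, μ {ω | ξ b ω = v} ≤ (L : ENNReal)⁻¹) →
      μ {ω | ¬ ∀ S : Finset (Fin K × Fin L), (S.card : ℝ) ≤ (L * K : ℝ) / 10 →
            (onesIn L K ξ S ω : ℝ) ≤ 9 * (L * K : ℝ) / 10}
          ≤ ENNReal.ofReal (2 ^ (L * K) * Real.exp (-(32 * (L * K : ℝ)) / 25)) ∧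
      ENNReal.ofReal 0.95 ≤
        μ {ω | ∀ S : Finset (Fin K × Fin L), (S.card : ℝ) ≤ (L * K : ℝ) / 10 →
            (onesIn L K ξ S ω : ℝ) ≤ 9 * (L * K : ℝ) / 10} := by
  classical
  use 30
  intro L K hL hK hN Ω mΩ μ hμ ξ hmeas hbd hindep hprob
  haveI := hμ
  set Bad := {ω | ¬ ∀ S : Finset (Fin K × Fin L), (S.card : ℝ) ≤ (L * K : ℝ) / 10 →
      (onesIn L K ξ S ω : ℝ) ≤ 9 * (L * K : ℝ) / 10} with hBad_def
  set E : Finset (Fin K × Fin L) → Set Ω := fun S =>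
    {ω | (S.card : ℝ) ≤ (L * K : ℝ) / 10 ∧ 9 * (L * K : ℝ) / 10 < (onesIn L K ξ S ω : ℝ)}
    with hE_def
  have hBadEq : Bad = ⋃ S : Finset (Fin K × Fin L), E S := by
    ext ω
    constructor
    · intro hω
      rw [hBad_def] at hω
      push_neg at hω
      obtain ⟨S, h1, h2⟩ := hω
      exact Set.mem_iUnion.2 ⟨S, h1, h2⟩
    · intro hω
      obtain ⟨S, hS⟩ := Set.mem_iUnion.1 hω
      intro h
      exact absurd (h S hS.1) (not_le.2 hS.2)
  have hE_le : ∀ S : Finset (Fin K × Fin L),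
      μ (E S) ≤ ENNReal.ofReal (Real.exp (-(32 * (L * K : ℝ)) / 25)) := by
    intro S
    by_cases hc : (S.card : ℝ) ≤ (L * K : ℝ) / 10
    · refine le_trans (measure_mono ?_) (perS hL hK μ ξ hmeas hindep hprob S hc)
      intro ω hω
      exact not_le.2 hω.2
    · have hempty : E S = ∅ := Set.eq_empty_iff_forall_notMem.2 fun ω hω => hc hω.1
      rw [hempty]
      simp
  have hμBad : μ Bad ≤ ENNReal.ofReal (2 ^ (L * K) * Real.exp (-(32 * (L * K : ℝ)) / 25)) := by
    calc μ Bad ≤ ∑' S : Finset (Fin K × Fin L), μ (E S) := by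
          rw [hBadEq]; exact measure_iUnion_le _
      _ = ∑ S : Finset (Fin K × Fin L), μ (E S) := tsum_fintype _
      _ ≤ (Finset.univ : Finset (Finset (Fin K × Fin L))).card
            • ENNReal.ofReal (Real.exp (-(32 * (L * K : ℝ)) / 25)) :=
          Finset.sum_le_card_nsmul _ _ _ fun S _ => hE_le S
      _ = ENNReal.ofReal (2 ^ (L * K) * Real.exp (-(32 * (L * K : ℝ)) / 25)) := by
          rw [Finset.card_univ, Fintype.card_finset, Fintype.card_prod, Fintype.card_fin,
            Fintype.card_fin, nsmul_eq_mul, mul_comm K L]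
          rw [← ENNReal.ofReal_natCast (2 ^ (L * K)), ← ENNReal.ofReal_mul (by positivity)]
          congr 1
          push_cast
          ring
  have hBadMeas : MeasurableSet Bad := by
    rw [hBadEq]
    apply MeasurableSet.iUnion
    intro S
    have : E S = {ω | (S.card : ℝ) ≤ (L * K : ℝ) / 10}
        ∩ {ω | 9 * (L * K : ℝ) / 10 < (onesIn L K ξ S ω : ℝ)} := by
      rw [hE_def]; ext ω; simp [Set.mem_inter_iff]
    rw [this]
    apply MeasurableSet.inter
    · by_cases hc : (S.card : ℝ) ≤ (L * K : ℝ) / 10 <;> simp [hc]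
    · exact measurableSet_lt measurable_const
        (measurable_from_nat.comp (onesIn_measurable ξ hmeas S))
  -- numeric bound on the failure probability
  have hnum : 2 ^ (L * K) * Real.exp (-(32 * (L * K : ℝ)) / 25) ≤ 0.05 := by
    have hexp : Real.exp (-(32 * (L * K : ℝ)) / 25) = Real.exp (-(32/25)) ^ (L * K) := by
      rw [← Real.exp_nat_mul]
      congr 1
      push_cast
      ring
    have hfac : (2:ℝ) * Real.exp (-(32/25)) ≤ 8 / 9 := by
      have h1 : (57/25 : ℝ) ≤ Real.exp (32/25) := by
        have := Real.add_one_le_exp (32/25 : ℝ)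
        linarith
      rw [Real.exp_neg]
      rw [mul_inv_le_iff₀ (lt_of_lt_of_le (by norm_num) h1)]
      nlinarith
    have hpow : (2:ℝ) ^ (L * K) * Real.exp (-(32/25)) ^ (L * K) = ((2:ℝ) * Real.exp (-(32/25))) ^ (L * K) := by
      rw [mul_pow]
    calc 2 ^ (L * K) * Real.exp (-(32 * (L * K : ℝ)) / 25)
        = ((2:ℝ) * Real.exp (-(32/25))) ^ (L * K) := by rw [hexp, hpow]
      _ ≤ (8/9 : ℝ) ^ (L * K) := by
          apply pow_le_pow_left₀ (by positivity) hfac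
      _ ≤ (8/9 : ℝ) ^ (30 : ℕ) := by
          apply pow_le_pow_of_le_one (by norm_num) (by norm_num) hN
      _ ≤ 0.05 := by norm_num
  refine ⟨hμBad, ?_⟩
  have hGood : {ω | ∀ S : Finset (Fin K × Fin L), (S.card : ℝ) ≤ (L * K : ℝ) / 10 →
      (onesIn L K ξ S ω : ℝ) ≤ 9 * (L * K : ℝ) / 10} = Badᶜ := by
    rw [hBad_def, ← Set.compl_setOf]
    simp
  rw [hGood, prob_compl_eq_one_sub hBadMeas]
  have hμBad' : μ Bad ≤ ENNReal.ofReal 0.05 :=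
    hμBad.trans (ENNReal.ofReal_le_ofReal hnum)
  have h95 : ENNReal.ofReal 0.95 = 1 - ENNReal.ofReal 0.05 := by
    rw [show (1 : ENNReal) = ENNReal.ofReal 1 by simp,
      ← ENNReal.ofReal_sub _ (by norm_num)]
    norm_num
  rw [h95]
  exact tsub_le_tsub_left hμBad' 1
end

section
/- Let p be a prime and n ≥ 1. Suppose a multiset I of intervals [a,b] with integer endpoints 0 ≤ a ≤ b ≤ n is encoded as follows for the batch partial sum reduction: a value v ∈ F_p stored at position k (1 ≤ k ≤ n/p, with n divisible by p) is represented by the interval [(k−1)p, (k−1)p + v̂] where v̂ ∈ {0,...,p−1} is the canonical representative of v (no interval if v = 0), and each position holds at most one interval. Then the total length of the union of all intervals equals ∑_k v̂_k, and hence the total length reduced modulo p equals ∑_k v_k in F_p. -/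
open MeasureTheory

/-- In the batch partial sum reduction, a value `v k ∈ F_p` at position `k` is encoded by the
interval `[(k−1)p, (k−1)p + v̂_k]` where `v̂_k ∈ {0,...,p−1}` is the canonical representative
(a degenerate interval when `v k = 0`).  The total length of the union of the intervals is
`∑_k v̂_k`, and hence reduced modulo `p` it is `∑_k v k` in `F_p`. -/
theorem stmt_14 {p : ℕ} [Fact p.Prime] (K : ℕ) (hK : 0 < K) (v : Fin K → ZMod p) :
    volume (⋃ k : Fin K,
        Set.Icc ((k : ℝ) * (p : ℝ)) ((k : ℝ) * (p : ℝ) + ((v k).val : ℝ)))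
      = ENNReal.ofReal (∑ k, ((v k).val : ℝ)) ∧
    ((∑ k, (v k).val : ℕ) : ZMod p) = ∑ k, v k := by
  have hp : 0 < p := (Fact.out : p.Prime).pos
  constructor
  · have hdisj : Pairwise (Function.onFun Disjoint fun k : Fin K =>
        Set.Icc ((k : ℝ) * (p : ℝ)) ((k : ℝ) * (p : ℝ) + ((v k).val : ℝ))) := by
      intro i j hij
      have key : ∀ i j : Fin K, (i : ℕ) < (j : ℕ) →
          Disjoint (Set.Icc ((i : ℝ) * (p : ℝ)) ((i : ℝ) * (p : ℝ) + ((v i).val : ℝ)))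
            (Set.Icc ((j : ℝ) * (p : ℝ)) ((j : ℝ) * (p : ℝ) + ((v j).val : ℝ))) := by
        intro i j h
        have hvi : ((v i).val : ℝ) < (p : ℝ) := by
          exact_mod_cast ZMod.val_lt (v i)
        have hij' : ((i : ℕ) : ℝ) + 1 ≤ ((j : ℕ) : ℝ) := by exact_mod_cast h
        have hp' : (0:ℝ) < p := by exact_mod_cast hp
        rw [Set.disjoint_left]
        rintro x ⟨_, hx2⟩ ⟨hx3, _⟩
        nlinarith
      rcases lt_or_gt_of_ne (Fin.val_ne_of_ne hij) with h | h
      · exact key i j h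
      · exact (key j i h).symm
    rw [measure_iUnion hdisj (fun k => measurableSet_Icc)]
    rw [tsum_fintype]
    rw [ENNReal.ofReal_sum_of_nonneg (fun k _ => by positivity)]
    congr 1
    ext k
    rw [Real.volume_Icc]
    congr 1
    ring
  · push_cast
    simp [ZMod.natCast_val, ZMod.cast_id]
end

section
/- Consider a directed graph G on vertex set {0, 1, ..., n} containing the Hamiltonian path edges i → i+1 for all 0 ≤ i < n, together with, for each interval [a,b] in a finite multiset I of intervals with integer endpoints 0 ≤ a ≤ b ≤ n, a back edge b → a. Then the number of strongly connected components of G equals (n+1) minus the total length of the union of the intervals in I. -/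
open MeasureTheory

open scoped Classical

/-- Edge relation of the dynamic #SCC reduction graph on vertices `{0, ..., n}`:
Hamiltonian path edges `i → i+1`, plus a back edge `b → a` for every interval `[a,b] ∈ I`. -/
def sccStep (n : ℕ) (I : Multiset (ℕ × ℕ)) (u v : Fin (n + 1)) : Prop :=
  (v : ℕ) = (u : ℕ) + 1 ∨ ∃ q ∈ I, q.2 = (u : ℕ) ∧ q.1 = (v : ℕ)

/-- Mutual reachability (same strongly connected component) in the reduction graph. -/
def sccMutual (n : ℕ) (I : Multiset (ℕ × ℕ)) (i j : Fin (n + 1)) : Prop :=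
  Relation.ReflTransGen (sccStep n I) i j ∧ Relation.ReflTransGen (sccStep n I) j i

namespace Stmt15

/-- Unit segment `[k,k+1]` is covered by some interval of `I`. -/
def covered (I : Multiset (ℕ × ℕ)) (k : ℕ) : Prop :=
  ∃ q ∈ I, q.1 ≤ k ∧ k + 1 ≤ q.2

/-- Number of uncovered unit segments below `i`. -/
noncomputable def f (I : Multiset (ℕ × ℕ)) (i : ℕ) : ℕ :=
  ((Finset.range i).filter (fun k => ¬ covered I k)).card

lemma f_zero (I : Multiset (ℕ × ℕ)) : f I 0 = 0 := by simp [f]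

lemma f_mono {I : Multiset (ℕ × ℕ)} : Monotone (f I) := fun i j h =>
  Finset.card_le_card (Finset.filter_subset_filter _ (by simpa using Finset.range_subset_range.2 h))

lemma f_succ (I : Multiset (ℕ × ℕ)) (i : ℕ) :
    f I (i + 1) = if covered I i then f I i else f I i + 1 := by
  unfold f
  rw [Finset.range_add_one, Finset.filter_insert]
  by_cases h : covered I i
  · rw [if_neg (not_not_intro h), if_pos h]
  · rw [if_pos h, if_neg h]
    exact Finset.card_insert_of_notMem (fun hm => by simp at hm)

lemma f_eq_iff (I : Multiset (ℕ × ℕ)) {i j : ℕ} (hij : i ≤ j) :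
    f I i = f I j ↔ ∀ k, i ≤ k → k < j → covered I k := by
  induction j, hij using Nat.le_induction with
  | base => exact ⟨fun _ k h1 h2 => absurd h2 (by omega), fun _ => rfl⟩
  | succ j hij ih =>
    have h1 : f I i ≤ f I j := f_mono hij
    have h2 : f I j ≤ f I (j + 1) := f_mono (Nat.le_succ j)
    have hs := f_succ I j
    constructor
    · intro h
      have hfij : f I i = f I j := le_antisymm h1 (by omega)
      intro k hk1 hk2
      rcases Nat.lt_succ_iff_lt_or_eq.mp hk2 with h' | h'
      · exact (ih.mp hfij) k hk1 h'
      · subst h'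
        by_contra hc
        rw [if_neg hc] at hs
        omega
    · intro h
      have hfij : f I i = f I j := ih.mpr (fun k a b => h k a (by omega))
      have hcov : covered I j := h j hij (Nat.lt_succ_self j)
      rw [if_pos hcov] at hs
      omega

lemma step_f_le {n : ℕ} {I : Multiset (ℕ × ℕ)} (hI : ∀ q ∈ I, q.1 ≤ q.2 ∧ q.2 ≤ n)
    {u v : Fin (n + 1)} (h : sccStep n I u v) : f I (u : ℕ) ≤ f I (v : ℕ) := by
  rcases h with h | ⟨q, hq, h2, h1⟩
  · rw [h, f_succ]; split <;> omega
  · have hle := (hI q hq).1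
    have heq : f I q.1 = f I q.2 :=
      (f_eq_iff I hle).mpr (fun k hk1 hk2 => ⟨q, hq, hk1, by omega⟩)
    rw [← h1, ← h2]
    omega

lemma reach_f_le {n : ℕ} {I : Multiset (ℕ × ℕ)} (hI : ∀ q ∈ I, q.1 ≤ q.2 ∧ q.2 ≤ n)
    {u v : Fin (n + 1)} (h : Relation.ReflTransGen (sccStep n I) u v) :
    f I (u : ℕ) ≤ f I (v : ℕ) := by
  induction h with
  | refl => exact le_rfl
  | tail _ hstep ih => exact le_trans ih (step_f_le hI hstep)

lemma reach_forward_aux {n : ℕ} {I : Multiset (ℕ × ℕ)} :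
    ∀ d (i j : Fin (n + 1)), (j : ℕ) = (i : ℕ) + d →
      Relation.ReflTransGen (sccStep n I) i j := by
  intro d
  induction d with
  | zero =>
    intro i j h
    have : i = j := Fin.ext (by omega)
    rw [this]
  | succ d ih =>
    intro i j h
    have hu : (i : ℕ) + d < n + 1 := by have := j.isLt; omega
    exact (ih i ⟨(i : ℕ) + d, hu⟩ rfl).tail (Or.inl (show (j : ℕ) = (i : ℕ) + d + 1 by omega))

lemma reach_forward {n : ℕ} {I : Multiset (ℕ × ℕ)} {i j : Fin (n + 1)}
    (h : (i : ℕ) ≤ (j : ℕ)) : Relation.ReflTransGen (sccStep n I) i j :=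
  reach_forward_aux ((j : ℕ) - (i : ℕ)) i j (by omega)

lemma reach_back {n : ℕ} {I : Multiset (ℕ × ℕ)} (hI : ∀ q ∈ I, q.1 ≤ q.2 ∧ q.2 ≤ n) :
    ∀ m (j i : Fin (n + 1)), (j : ℕ) ≤ m → (i : ℕ) ≤ (j : ℕ) →
      (∀ k, (i : ℕ) ≤ k → k < (j : ℕ) → covered I k) →
      Relation.ReflTransGen (sccStep n I) j i := by
  intro m
  induction m with
  | zero =>
    intro j i h1 h2 _
    have : j = i := Fin.ext (by omega)
    rw [this]
  | succ m ih =>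
    intro j i hjm hij hcov
    rcases eq_or_lt_of_le hij with heq | hlt
    · have : j = i := Fin.ext heq.symm
      rw [this]
    · obtain ⟨q, hqI, hq1, hq2⟩ := hcov ((j : ℕ) - 1) (by omega) (by omega)
      have hq2' : (j : ℕ) ≤ q.2 := by omega
      have hqn := (hI q hqI).2
      have hq12 := (hI q hqI).1
      have r1 : Relation.ReflTransGen (sccStep n I) j ⟨q.2, by omega⟩ :=
        reach_forward (by simpa using hq2')
      have hstep : sccStep n I ⟨q.2, by omega⟩ ⟨q.1, by omega⟩ :=
        Or.inr ⟨q, hqI, rfl, rfl⟩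
      have r2 : Relation.ReflTransGen (sccStep n I) ⟨q.1, by omega⟩ i := by
        rcases le_or_gt q.1 (i : ℕ) with h | h
        · exact reach_forward (by simpa using h)
        · exact ih ⟨q.1, by omega⟩ i (by simp; omega) (by simp; omega)
            (fun k hk1 hk2 => hcov k hk1 (by simp at hk2; omega))
      exact (r1.trans (Relation.ReflTransGen.single hstep)).trans r2

lemma mutual_iff {n : ℕ} {I : Multiset (ℕ × ℕ)} (hI : ∀ q ∈ I, q.1 ≤ q.2 ∧ q.2 ≤ n)
    (i j : Fin (n + 1)) : sccMutual n I i j ↔ f I (i : ℕ) = f I (j : ℕ) := by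
  constructor
  · rintro ⟨h1, h2⟩
    exact le_antisymm (reach_f_le hI h1) (reach_f_le hI h2)
  · intro h
    rcases le_total ((i : ℕ)) ((j : ℕ)) with hle | hle
    · exact ⟨reach_forward hle,
        reach_back hI (j : ℕ) j i le_rfl hle ((f_eq_iff I hle).mp h)⟩
    · exact ⟨reach_back hI (i : ℕ) i j le_rfl hle ((f_eq_iff I hle).mp h.symm),
        reach_forward hle⟩

lemma exists_f_eq (I : Multiset (ℕ × ℕ)) : ∀ i m, m ≤ f I i → ∃ j ≤ i, f I j = m := by
  intro i
  induction i with
  | zero =>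
    intro m hm
    rw [f_zero] at hm
    exact ⟨0, le_rfl, by rw [f_zero]; omega⟩
  | succ i ih =>
    intro m hm
    rcases le_or_gt m (f I i) with h | h
    · obtain ⟨j, hj, hf⟩ := ih m h
      exact ⟨j, by omega, hf⟩
    · have hs := f_succ I i
      have : f I (i + 1) = m := by split at hs <;> omega
      exact ⟨i + 1, le_rfl, this⟩

lemma card_quot {n : ℕ} {I : Multiset (ℕ × ℕ)} (hI : ∀ q ∈ I, q.1 ≤ q.2 ∧ q.2 ≤ n) :
    Nat.card (Quot (sccMutual n I))
      = n - ((Finset.range n).filter (fun k => covered I k)).card + 1 := by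
  set c := ((Finset.range n).filter (fun k => covered I k)).card with hc
  have hsum : c + f I n = n := by
    have h := Finset.card_filter_add_card_filter_not
      (s := Finset.range n) (p := fun k => covered I k)
    simpa [f, hc] using h
  have hub : ∀ i : Fin (n + 1), f I (i : ℕ) < n - c + 1 := fun i => by
    have := f_mono (I := I) (Nat.lt_succ_iff.mp i.isLt)
    omega
  let F : Quot (sccMutual n I) → Fin (n - c + 1) :=
    Quot.lift (fun i => ⟨f I (i : ℕ), hub i⟩)
      (fun a b h => Fin.ext ((mutual_iff hI a b).mp h))
  have hbij : Function.Bijective F := by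
    constructor
    · refine Quot.ind (fun a => Quot.ind (fun b h => ?_))
      exact Quot.sound ((mutual_iff hI a b).mpr (by simpa [F] using congrArg Fin.val h))
    · intro m
      have hm : (m : ℕ) ≤ f I n := by have := m.isLt; omega
      obtain ⟨j, hj, hfj⟩ := exists_f_eq I n (m : ℕ) hm
      exact ⟨Quot.mk _ ⟨j, by omega⟩, Fin.ext (by simpa [F] using hfj)⟩
  rw [Nat.card_eq_of_bijective F hbij]
  simp

lemma volume_eq {n : ℕ} {I : Multiset (ℕ × ℕ)} (hI : ∀ q ∈ I, q.1 ≤ q.2 ∧ q.2 ≤ n) :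
    volume (⋃ q ∈ I.toFinset, Set.Icc ((q.1 : ℝ)) ((q.2 : ℝ)))
      = (((Finset.range n).filter (fun k => covered I k)).card : ENNReal) := by
  set S := (Finset.range n).filter (fun k => covered I k) with hS
  have hdisj : (↑S : Set ℕ).PairwiseDisjoint (fun k : ℕ => Set.Ico (k : ℝ) (k + 1)) := by
    intro a _ b _ hab
    rw [Function.onFun, Set.Ico_disjoint_Ico]
    rcases lt_or_gt_of_ne hab with h | h
    · calc min ((a : ℝ) + 1) ((b : ℝ) + 1) ≤ (a : ℝ) + 1 := min_le_left _ _
        _ ≤ (b : ℝ) := by exact_mod_cast Nat.succ_le_of_lt h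
        _ ≤ max (a : ℝ) (b : ℝ) := le_max_right _ _
    · calc min ((a : ℝ) + 1) ((b : ℝ) + 1) ≤ (b : ℝ) + 1 := min_le_right _ _
        _ ≤ (a : ℝ) := by exact_mod_cast Nat.succ_le_of_lt h
        _ ≤ max (a : ℝ) (b : ℝ) := le_max_left _ _
  have hA : volume (⋃ k ∈ S, Set.Ico (k : ℝ) (k + 1)) = (S.card : ENNReal) := by
    rw [measure_biUnion_finset hdisj (fun k _ => measurableSet_Ico)]
    simp [Real.volume_Ico]
  have hsub1 : (⋃ k ∈ S, Set.Ico (k : ℝ) (k + 1)) ⊆ ⋃ q ∈ I.toFinset, Set.Icc ((q.1 : ℝ)) ((q.2 : ℝ)) := by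
    intro x hx
    rw [Set.mem_iUnion₂] at hx
    obtain ⟨k, hkS, hxk⟩ := hx
    have hk : covered I k := (Finset.mem_filter.mp hkS).2
    obtain ⟨q, hqI, h1, h2⟩ := hk
    rw [Set.mem_iUnion₂]
    refine ⟨q, Multiset.mem_toFinset.mpr hqI, ?_, ?_⟩
    · exact le_trans (by exact_mod_cast h1) hxk.1
    · exact le_trans (le_of_lt hxk.2) (by exact_mod_cast h2)
  have hsub2 : (⋃ q ∈ I.toFinset, Set.Icc ((q.1 : ℝ)) ((q.2 : ℝ))) ⊆ (⋃ k ∈ S, Set.Ico (k : ℝ) (k + 1)) ∪ Set.range ((↑) : ℕ → ℝ) := by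
    intro x hx
    rw [Set.mem_iUnion₂] at hx
    obtain ⟨q, hqF, hx1, hx2⟩ := hx
    have hq := hI q (Multiset.mem_toFinset.mp hqF)
    have hx0 : (0 : ℝ) ≤ x := le_trans (by positivity) hx1
    by_cases hint : x = ((⌊x⌋.toNat : ℕ) : ℝ)
    · exact Or.inr ⟨_, hint.symm⟩
    · left
      set k := ⌊x⌋.toNat with hk
      have h0 : 0 ≤ ⌊x⌋ := Int.floor_nonneg.mpr hx0
      have hkr : (k : ℝ) = ((⌊x⌋ : ℤ) : ℝ) := by
        exact_mod_cast congrArg (Int.cast : ℤ → ℝ) (Int.toNat_of_nonneg h0)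
      have hfl : (k : ℝ) ≤ x := by rw [hkr]; exact Int.floor_le x
      have hfl2 : x < (k : ℝ) + 1 := by rw [hkr]; exact_mod_cast Int.lt_floor_add_one x
      have hflt : (k : ℝ) < x := lt_of_le_of_ne hfl (fun he => hint he.symm)
      have hq1k : q.1 ≤ k := by
        have : (q.1 : ℝ) < (k : ℝ) + 1 := lt_of_le_of_lt hx1 hfl2
        have : (q.1 : ℕ) < k + 1 := by exact_mod_cast this
        omega
      have hkq2 : k + 1 ≤ q.2 := by
        have : (k : ℝ) < (q.2 : ℝ) := lt_of_lt_of_le hflt hx2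
        have : k < q.2 := by exact_mod_cast this
        omega
      have hkn : k < n := by omega
      rw [Set.mem_iUnion₂]
      refine ⟨k, Finset.mem_filter.mpr ⟨Finset.mem_range.mpr hkn,
        ⟨q, Multiset.mem_toFinset.mp hqF, hq1k, hkq2⟩⟩, hfl, hfl2⟩
  have hnull : volume (Set.range ((↑) : ℕ → ℝ)) = 0 :=
    (Set.countable_range _).measure_zero _
  have hle : volume (⋃ q ∈ I.toFinset, Set.Icc ((q.1 : ℝ)) ((q.2 : ℝ))) ≤ (S.card : ENNReal) := by
    calc volume (⋃ q ∈ I.toFinset, Set.Icc ((q.1 : ℝ)) ((q.2 : ℝ))) ≤ volume ((⋃ k ∈ S, Set.Ico (k : ℝ) (k + 1)) ∪ Set.range ((↑) : ℕ → ℝ)) :=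
          measure_mono hsub2
      _ ≤ volume (⋃ k ∈ S, Set.Ico (k : ℝ) (k + 1)) + volume (Set.range ((↑) : ℕ → ℝ)) :=
          measure_union_le _ _
      _ = (S.card : ENNReal) := by rw [hA, hnull, add_zero]
  have hge : (S.card : ENNReal) ≤ volume (⋃ q ∈ I.toFinset, Set.Icc ((q.1 : ℝ)) ((q.2 : ℝ))) := hA ▸ measure_mono hsub1
  exact le_antisymm hle hge

end Stmt15

/-- The number of strongly connected components of the reduction graph equals `(n+1)` minus
the total length of the union of the intervals in `I`. -/
theorem stmt_15 (n : ℕ) (hn : 0 < n) (I : Multiset (ℕ × ℕ))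
    (hI : ∀ q ∈ I, q.1 ≤ q.2 ∧ q.2 ≤ n) :
    (Nat.card (Quot (sccMutual n I)) : ℝ)
      = (n : ℝ) + 1
        - (volume (⋃ q ∈ I.toFinset, Set.Icc ((q.1 : ℝ)) ((q.2 : ℝ)))).toReal := by
  have hcard := Stmt15.card_quot hI
  have hvol := Stmt15.volume_eq hI
  set c := ((Finset.range n).filter (fun k => Stmt15.covered I k)).card with hc
  have hcn : c ≤ n := le_trans (Finset.card_filter_le _ _) (by simp)
  rw [hcard, hvol, ENNReal.toReal_natCast]
  push_cast [Nat.cast_sub hcn]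
  ring
end

section
/- Let I be a finite multiset of intervals [a,b] with integer endpoints 0 ≤ a ≤ b ≤ n. Consider the weighted directed graph G on vertex set {s, 0, 1, ..., n, t} with edges: s → 0 of weight 0, n → t of weight 0, i → i+1 of weight 1 and i+1 → i of weight 0 for all 0 ≤ i < n, and for each [a,b] ∈ I an edge a → b of weight 0. Then the weight of the shortest path from s to t equals (n) minus the total length of the union of the intervals in I; equivalently it equals the number of unit segments [i, i+1] (0 ≤ i < n) not covered by any interval in I. -/
open MeasureTheory

/-- Weighted edge relation of the dynamic shortest path reduction graph.  Vertices are
`Sum.inl i` for path vertices `i ∈ {0,...,n}`, `Sum.inr false = s` and `Sum.inr true = t`.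
Edges: `s → 0` of weight 0, `n → t` of weight 0, `i → i+1` of weight 1 and `i+1 → i` of
weight 0 for `0 ≤ i < n`, and `a → b` of weight 0 for every interval `[a,b] ∈ I`. -/
def spEdge (n : ℕ) (I : Multiset (ℕ × ℕ)) (u v : ℕ ⊕ Bool) (c : ℕ) : Prop :=
  (u = Sum.inr false ∧ v = Sum.inl 0 ∧ c = 0) ∨
  (u = Sum.inl n ∧ v = Sum.inr true ∧ c = 0) ∨
  (∃ i, i < n ∧ u = Sum.inl i ∧ v = Sum.inl (i + 1) ∧ c = 1) ∨
  (∃ i, i < n ∧ u = Sum.inl (i + 1) ∧ v = Sum.inl i ∧ c = 0) ∨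
  (∃ q ∈ I, u = Sum.inl q.1 ∧ v = Sum.inl q.2 ∧ c = 0)

/-- `Reach w u v c`: there is a directed path from `u` to `v` of total weight `c` in the
weighted graph with edge relation `w`. -/
inductive Reach {V : Type*} (w : V → V → ℕ → Prop) : V → V → ℕ → Prop
  | refl (v : V) : Reach w v v 0
  | step {u v x : V} {c c' : ℕ} : w u v c → Reach w v x c' → Reach w u x (c + c')

namespace SP16

theorem reach_trans {V : Type*} {w : V → V → ℕ → Prop} {u v x : V} {c c' : ℕ}
    (h : Reach w u v c) (h' : Reach w v x c') : Reach w u x (c + c') := by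
  induction h with
  | refl => simpa using h'
  | step e _ ih => rw [add_assoc]; exact Reach.step e (ih h')

variable (n : ℕ) (I : Multiset (ℕ × ℕ))

def covered (i : ℕ) : Prop := ∃ q ∈ I, q.1 ≤ i ∧ i + 1 ≤ q.2

instance : DecidablePred (covered I) := fun i => by
  unfold covered; exact Multiset.decidableExistsMultiset

/-- number of uncovered unit segments below `k` -/
def f (k : ℕ) : ℕ := ((Finset.range k).filter (fun i => ¬ covered I i)).card

theorem f_mono : Monotone (f I) := fun a b hab =>
  Finset.card_le_card (Finset.filter_subset_filter _ (by simpa using hab))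

theorem f_succ (k : ℕ) : f I (k + 1) = f I k + (if covered I k then 0 else 1) := by
  unfold f
  rw [Finset.range_add_one, Finset.filter_insert]
  split_ifs with h
  · simp [h]
  · rw [Finset.card_insert_of_notMem (fun hmem => Finset.notMem_range_self (Finset.mem_filter.mp hmem).1)]

theorem f_interval {q : ℕ × ℕ} (hq : q ∈ I) : f I q.2 ≤ f I q.1 := by
  apply Finset.card_le_card
  intro i hi
  simp only [Finset.mem_filter, Finset.mem_range] at hi ⊢
  refine ⟨?_, hi.2⟩
  by_contra h
  push_neg at h
  exact hi.2 ⟨q, hq, h, hi.1⟩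

theorem reach_down {i j : ℕ} (hij : i ≤ j) (hj : j ≤ n) :
    Reach (spEdge n I) (Sum.inl j) (Sum.inl i) 0 := by
  induction j with
  | zero => obtain rfl : i = 0 := Nat.le_zero.mp hij; exact Reach.refl _
  | succ m ih =>
    rcases Nat.eq_or_lt_of_le hij with rfl | h
    · exact Reach.refl _
    · have e : spEdge n I (Sum.inl (m + 1)) (Sum.inl m) 0 := by
        refine Or.inr (Or.inr (Or.inr (Or.inl ⟨m, ?_, rfl, rfl, rfl⟩)))
        omega
      exact Reach.step e (ih (by omega) (by omega))

theorem reach_to_t (hI : ∀ q ∈ I, q.1 ≤ q.2 ∧ q.2 ≤ n) :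
    ∀ d i, i + d = n → Reach (spEdge n I) (Sum.inl i) (Sum.inr true) (f I n - f I i) := by
  intro d
  induction d with
  | zero =>
    intro i hi
    obtain rfl : n = i := by omega
    have e : spEdge n I (Sum.inl n) (Sum.inr true) 0 := Or.inr (Or.inl ⟨rfl, rfl, rfl⟩)
    simpa using Reach.step e (Reach.refl _)
  | succ d ih =>
    intro i hi
    have hin : i < n := by omega
    have hrec := ih (i + 1) (by omega)
    by_cases hc : covered I i
    · obtain ⟨q, hq, hq1, hq2⟩ := hc
      have h1 : Reach (spEdge n I) (Sum.inl i) (Sum.inl q.1) 0 :=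
        reach_down n I hq1 (by omega)
      have e : spEdge n I (Sum.inl q.1) (Sum.inl q.2) 0 :=
        Or.inr (Or.inr (Or.inr (Or.inr ⟨q, hq, rfl, rfl, rfl⟩)))
      have h2 : Reach (spEdge n I) (Sum.inl q.2) (Sum.inl (i + 1)) 0 :=
        reach_down n I hq2 (hI q hq).2
      have hcov : covered I i := ⟨q, hq, hq1, hq2⟩
      have hfi : f I (i + 1) = f I i := by
        rw [f_succ]; simp [hcov]
      have := reach_trans h1 (Reach.step e (reach_trans h2 hrec))
      simpa [hfi] using this
    · have e : spEdge n I (Sum.inl i) (Sum.inl (i + 1)) 1 :=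
        Or.inr (Or.inr (Or.inl ⟨i, hin, rfl, rfl, rfl⟩))
      have hfi : f I (i + 1) = f I i + 1 := by rw [f_succ]; simp [hc]
      have hle : f I (i + 1) ≤ f I n := f_mono I (by omega)
      have := Reach.step e hrec
      have harith : 1 + (f I n - f I (i + 1)) = f I n - f I i := by omega
      rwa [harith] at this

def phi (n : ℕ) (I : Multiset (ℕ × ℕ)) : ℕ ⊕ Bool → ℕ
  | Sum.inl i => f I (min i n)
  | Sum.inr false => 0
  | Sum.inr true => f I n

theorem phi_edge (hI : ∀ q ∈ I, q.1 ≤ q.2 ∧ q.2 ≤ n) {u v : ℕ ⊕ Bool} {c : ℕ}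
    (h : spEdge n I u v c) : phi n I v ≤ phi n I u + c := by
  rcases h with ⟨rfl, rfl, rfl⟩ | ⟨rfl, rfl, rfl⟩ | ⟨i, hi, rfl, rfl, rfl⟩ |
    ⟨i, hi, rfl, rfl, rfl⟩ | ⟨q, hq, rfl, rfl, rfl⟩
  · simp [phi, f]
  · simp [phi]
  · simp only [phi]
    have h1 : min (i + 1) n = i + 1 := min_eq_left (by omega)
    have h2 : min i n = i := min_eq_left (by omega)
    rw [h1, h2, f_succ]
    split_ifs <;> omega
  · simp only [phi]
    have h1 : min (i + 1) n = i + 1 := min_eq_left (by omega)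
    have h2 : min i n = i := min_eq_left (by omega)
    rw [h1, h2]
    simpa using f_mono I (Nat.le_succ i)
  · simp only [phi]
    have h1 : min q.2 n = q.2 := min_eq_left (hI q hq).2
    have h2 : min q.1 n = q.1 := min_eq_left (le_trans (hI q hq).1 (hI q hq).2)
    rw [h1, h2]
    exact le_trans (f_interval I hq) (by omega)

theorem phi_reach (hI : ∀ q ∈ I, q.1 ≤ q.2 ∧ q.2 ≤ n) {u v : ℕ ⊕ Bool} {c : ℕ}
    (h : Reach (spEdge n I) u v c) : phi n I v ≤ phi n I u + c := by
  induction h with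
  | refl => simp
  | step e _ ih =>
    calc phi n I _ ≤ _ + _ := ih
    _ ≤ (phi n I _ + _) + _ := by gcongr; exact phi_edge n I hI e
    _ = _ := by ring

end SP16

/-- The shortest path weight from `s` to `t` in the reduction graph equals the number of unit
segments `[i, i+1]` (`0 ≤ i < n`) not covered by any interval in `I`, which equals `n` minus
the total length of the union of the intervals in `I`. -/
theorem stmt_16 (n : ℕ) (hn : 0 < n) (I : Multiset (ℕ × ℕ))
    (hI : ∀ q ∈ I, q.1 ≤ q.2 ∧ q.2 ≤ n) :
    IsLeast {c : ℕ | Reach (spEdge n I) (Sum.inr false) (Sum.inr true) c}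
      (Set.ncard {i : ℕ | i < n ∧ ¬ ∃ q ∈ I, q.1 ≤ i ∧ i + 1 ≤ q.2}) ∧
    (Set.ncard {i : ℕ | i < n ∧ ¬ ∃ q ∈ I, q.1 ≤ i ∧ i + 1 ≤ q.2} : ℝ)
      = (n : ℝ)
        - (volume (⋃ q ∈ I.toFinset, Set.Icc ((q.1 : ℝ)) ((q.2 : ℝ)))).toReal := by
  classical
  have hset : {i : ℕ | i < n ∧ ¬ ∃ q ∈ I, q.1 ≤ i ∧ i + 1 ≤ q.2}
      = ↑((Finset.range n).filter (fun i => ¬ SP16.covered I i)) := by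
    ext i
    simp [SP16.covered, and_comm]
  have hncard : Set.ncard {i : ℕ | i < n ∧ ¬ ∃ q ∈ I, q.1 ≤ i ∧ i + 1 ≤ q.2} = SP16.f I n := by
    rw [hset, Set.ncard_coe_finset]; rfl
  rw [hncard]
  constructor
  · constructor
    · -- membership
      have e : spEdge n I (Sum.inr false) (Sum.inl 0) 0 := Or.inl ⟨rfl, rfl, rfl⟩
      have h0 : SP16.f I 0 = 0 := by simp [SP16.f]
      have := Reach.step e (SP16.reach_to_t n I hI n 0 (by omega))
      simpa [h0] using this
    · -- lower bound
      intro c hc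
      have := SP16.phi_reach n I hI hc
      simpa [SP16.phi] using this
  · -- measure part
    set C := (Finset.range n).filter (SP16.covered I) with hC
    have hCcard : SP16.f I n + C.card = n := by
      unfold SP16.f
      rw [hC, add_comm, Finset.card_filter_add_card_filter_not, Finset.card_range]
    have hvol : volume (⋃ q ∈ I.toFinset, Set.Icc ((q.1 : ℝ)) ((q.2 : ℝ))) = C.card := by
      apply le_antisymm
      · -- upper bound
        have hsub : (⋃ q ∈ I.toFinset, Set.Icc ((q.1 : ℝ)) ((q.2 : ℝ))) ⊆
            (⋃ i ∈ C, Set.Icc (i : ℝ) ((i : ℝ) + 1)) ∪ Set.range ((↑) : ℕ → ℝ) := by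
          intro x hx
          simp only [Set.mem_iUnion, Set.mem_Icc] at hx
          obtain ⟨q, hq, hx1, hx2⟩ := hx
          rw [Multiset.mem_toFinset] at hq
          rcases eq_or_lt_of_le (hI q hq).1 with heq | hlt
          · right
            have : x = (q.1 : ℝ) := le_antisymm (heq ▸ hx2) hx1
            exact ⟨q.1, this.symm⟩
          · left
            have hx0 : (0 : ℝ) ≤ x := le_trans (by positivity) hx1
            set i := min (Nat.floor x) (q.2 - 1) with hi
            have hiq1 : q.1 ≤ i := by
              have h1 : q.1 ≤ Nat.floor x := Nat.le_floor (by exact_mod_cast hx1)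
              omega
            have hiq2 : i + 1 ≤ q.2 := by omega
            have hcov : SP16.covered I i := ⟨q, hq, hiq1, hiq2⟩
            have hiltn : i < n := by have := (hI q hq).2; omega
            simp only [Set.mem_iUnion, Set.mem_Icc]
            refine ⟨i, by simp [hC, Finset.mem_filter, hiltn, hcov], ?_, ?_⟩
            · calc (i : ℝ) ≤ Nat.floor x := by exact_mod_cast min_le_left _ _
              _ ≤ x := Nat.floor_le hx0
            · rcases le_or_gt (Nat.floor x) (q.2 - 1) with h | h
              · have : i = Nat.floor x := by omega
                rw [this]
                exact (Nat.lt_floor_add_one x).le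
              · have : i = q.2 - 1 := by omega
                rw [this]
                have : ((q.2 - 1 : ℕ) : ℝ) + 1 = (q.2 : ℝ) := by
                  have : 1 ≤ q.2 := by omega
                  push_cast [this]; ring
                rw [this]
                exact hx2
        calc volume (⋃ q ∈ I.toFinset, Set.Icc ((q.1 : ℝ)) ((q.2 : ℝ)))
            ≤ volume ((⋃ i ∈ C, Set.Icc (i : ℝ) ((i : ℝ) + 1)) ∪ Set.range ((↑) : ℕ → ℝ)) :=
              measure_mono hsub
          _ ≤ volume (⋃ i ∈ C, Set.Icc (i : ℝ) ((i : ℝ) + 1))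
              + volume (Set.range ((↑) : ℕ → ℝ)) := measure_union_le _ _
          _ = volume (⋃ i ∈ C, Set.Icc (i : ℝ) ((i : ℝ) + 1)) := by
              rw [Set.Countable.measure_zero (Set.countable_range _) volume, add_zero]
          _ ≤ ∑ i ∈ C, volume (Set.Icc (i : ℝ) ((i : ℝ) + 1)) := measure_biUnion_finset_le _ _
          _ = ∑ i ∈ C, 1 := by
              apply Finset.sum_congr rfl
              intro i _
              rw [Real.volume_Icc]
              norm_num
          _ = C.card := by simp
      · -- lower bound
        have hsub : (⋃ i ∈ C, Set.Ioo (i : ℝ) ((i : ℝ) + 1)) ⊆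
            (⋃ q ∈ I.toFinset, Set.Icc ((q.1 : ℝ)) ((q.2 : ℝ))) := by
          intro x hx
          simp only [Set.mem_iUnion, Set.mem_Ioo, Set.mem_Icc] at hx ⊢
          obtain ⟨i, hiC, hx1, hx2⟩ := hx
          rw [hC, Finset.mem_filter] at hiC
          obtain ⟨q, hq, hq1, hq2⟩ := hiC.2
          refine ⟨q, Multiset.mem_toFinset.mpr hq, ?_, ?_⟩
          · calc (q.1 : ℝ) ≤ (i : ℝ) := by exact_mod_cast hq1
            _ ≤ x := hx1.le
          · calc x ≤ (i : ℝ) + 1 := hx2.le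
            _ = ((i + 1 : ℕ) : ℝ) := by push_cast; ring
            _ ≤ (q.2 : ℝ) := by exact_mod_cast hq2
        have hdisj : (↑C : Set ℕ).PairwiseDisjoint (fun i => Set.Ioo (i : ℝ) ((i : ℝ) + 1)) := by
          intro a _ b _ hab
          apply Set.disjoint_left.mpr
          intro x hxa hxb
          simp only [Set.mem_Ioo] at hxa hxb
          rcases Nat.lt_or_ge a b with h | h
          · have : (a : ℝ) + 1 ≤ (b : ℝ) := by exact_mod_cast h
            linarith [hxa.2, hxb.1]
          · have hba : b < a := lt_of_le_of_ne h (Ne.symm hab)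
            have : (b : ℝ) + 1 ≤ (a : ℝ) := by exact_mod_cast hba
            linarith [hxa.1, hxb.2]
        have hone : ∀ i ∈ C, volume (Set.Ioo (i : ℝ) ((i : ℝ) + 1)) = 1 := by
          intro i _
          rw [Real.volume_Ioo]
          norm_num
        calc (C.card : ENNReal) = ∑ i ∈ C, volume (Set.Ioo (i : ℝ) ((i : ℝ) + 1)) := by
              rw [Finset.sum_congr rfl hone]
              simp
          _ = volume (⋃ i ∈ C, Set.Ioo (i : ℝ) ((i : ℝ) + 1)) :=
              (measure_biUnion_finset hdisj (fun i _ => measurableSet_Ioo)).symm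
          _ ≤ _ := measure_mono hsub
    rw [hvol]
    simp only [ENNReal.toReal_natCast]
    have : (SP16.f I n : ℝ) + (C.card : ℝ) = (n : ℝ) := by exact_mod_cast hCcard
    linarith
end
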